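/- Fix ν > 0 and h ∈ [0, 1), set θ_h := arcsin h, and define G : ℝ → ℝ by G(x) := (2ν/π)·∫₀^∞ t·e^{−t|x|·cos θ_h} / (ν²t²cos²θ_h + 4(t² − 1)²) dt. Then there exists a constant C > 0 such that |G(x) − ν/(2π·cos²θ_h·x²)| ≤ C/x⁴ for all |x| ≥ 1. -/

import Mathlib

open MeasureTheory Real Filter Set
open scoped ENNReal Topology

/-- The fundamental solution of the linearized Néel wall operator
`L = -d²/dx² + (ν/2) cos²θ_h (-d²/dx²)^{1/2} + cos²θ_h`, with `θ_h = arcsin h`. -/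
noncomputable def Gfun (ν h : ℝ) (x : ℝ) : ℝ :=
  2 * ν / Real.pi *
    ∫ t in Set.Ioi (0 : ℝ),
      t * Real.exp (-t * |x| * Real.cos (Real.arcsin h)) /
        (ν ^ 2 * t ^ 2 * Real.cos (Real.arcsin h) ^ 2 + 4 * (t ^ 2 - 1) ^ 2)

/-!
With `c = cos θ_h` and `r = c|x|`, `G(x) = (2ν/π) ∫₀^∞ t e^{-rt} / D(t) dt` where
`D(t) = ν²c²t² + 4(t² - 1)²`. As `D ≥ min(ν²c²/4, 9/4) > 0` and
`4 - D(t) = t² (8 - ν²c² - 4t²)`, we have `|1/D(t) - 1/4| ≤ K (t² + t⁴)`.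
Replacing `1/D` by `1/4` gives the leading term `(2ν/π) / (4r²) = ν / (2π c² x²)`, and the error is bounded by
`K ∫₀^∞ (t³ + t⁵) e^{-rt} dt = K (3!/r⁴ + 5!/r⁶) = O(x⁻⁴)` for `|x| ≥ 1`.
-/

lemma integrableOn_pow_mul_exp_neg_mul (n : ℕ) {r : ℝ} (hr : 0 < r) :
    IntegrableOn (fun t : ℝ => t ^ n * exp (-(r * t))) (Ioi 0) := by
  refine (integrableOn_rpow_mul_exp_neg_mul_rpow (s := n) (by linarith [n.cast_nonneg (α := ℝ)])
    one_pos hr).congr_fun (fun t _ => ?_) measurableSet_Ioi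
  simp only [rpow_one, rpow_natCast, neg_mul]

lemma integral_pow_mul_exp_neg_mul (n : ℕ) {r : ℝ} (hr : 0 < r) :
    ∫ t in Ioi (0 : ℝ), t ^ n * exp (-(r * t)) = n.factorial / r ^ (n + 1) := by
  have h := integral_rpow_mul_exp_neg_mul_Ioi (a := n + 1) (by positivity) hr
  rw [add_sub_cancel_right, Gamma_nat_eq_factorial, ← Nat.cast_add_one, rpow_natCast,
    one_div_pow] at h
  simp_rw [rpow_natCast] at h
  rw [h, one_div_mul_eq_div]

lemma abs_integral_mul_exp_neg_mul_sub_le {φ : ℝ → ℝ} {L K r : ℝ} (hr : 0 < r)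
    (hφ : AEStronglyMeasurable φ (volume.restrict (Ioi 0)))
    (hφL : ∀ t ∈ Ioi (0 : ℝ), |φ t - L| ≤ K * (t ^ 2 + t ^ 4)) :
    |(∫ t in Ioi (0 : ℝ), t * exp (-(r * t)) * φ t) - L / r ^ 2|
      ≤ K * (6 / r ^ 4 + 120 / r ^ 6) := by
  set w : ℝ → ℝ := fun t => t * exp (-(r * t))
  have hw : IntegrableOn w (Ioi 0) := by
    simpa [w] using integrableOn_pow_mul_exp_neg_mul 1 hr
  have hbound : IntegrableOn (fun t => K * (t ^ 3 * exp (-(r * t)) + t ^ 5 * exp (-(r * t))))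
      (Ioi 0) :=
    ((integrableOn_pow_mul_exp_neg_mul 3 hr).add
      (integrableOn_pow_mul_exp_neg_mul 5 hr)).const_mul K
  have hpt : ∀ᵐ t ∂(volume.restrict (Ioi 0)),
      ‖w t * (φ t - L)‖ ≤ K * (t ^ 3 * exp (-(r * t)) + t ^ 5 * exp (-(r * t))) := by
    filter_upwards [ae_restrict_mem measurableSet_Ioi] with t ht
    have hwt : 0 ≤ w t := by have : (0 : ℝ) < t := ht; positivity
    calc ‖w t * (φ t - L)‖ = w t * |φ t - L| := by rw [norm_mul, norm_of_nonneg hwt]; rfl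
      _ ≤ w t * (K * (t ^ 2 + t ^ 4)) := by gcongr; exact hφL t ht
      _ = _ := by ring
  have hdiff : IntegrableOn (fun t => w t * (φ t - L)) (Ioi 0) :=
    hbound.mono' (hw.aestronglyMeasurable.mul (hφ.sub aestronglyMeasurable_const)) hpt
  have hwφ : IntegrableOn (fun t => w t * φ t) (Ioi 0) :=
    (hdiff.add (hw.mul_const L)).congr_fun (fun t _ => by simp only [Pi.add_apply]; ring)
      measurableSet_Ioi
  have hwL : ∫ t in Ioi (0 : ℝ), w t * L = L / r ^ 2 := by
    have h1 := integral_pow_mul_exp_neg_mul 1 hr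
    simp only [pow_one, Nat.factorial_one, Nat.cast_one] at h1
    rw [integral_mul_const, h1]
    ring
  calc |(∫ t in Ioi (0 : ℝ), w t * φ t) - L / r ^ 2|
      = |∫ t in Ioi (0 : ℝ), w t * (φ t - L)| := by
        simp_rw [mul_sub]; rw [integral_sub hwφ (hw.mul_const L), hwL]
    _ ≤ ∫ t in Ioi (0 : ℝ), K * (t ^ 3 * exp (-(r * t)) + t ^ 5 * exp (-(r * t))) :=
        norm_integral_le_of_norm_le hbound hpt
    _ = K * (6 / r ^ 4 + 120 / r ^ 6) := by
        rw [integral_const_mul, integral_add (integrableOn_pow_mul_exp_neg_mul 3 hr)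
          (integrableOn_pow_mul_exp_neg_mul 5 hr), integral_pow_mul_exp_neg_mul 3 hr,
          integral_pow_mul_exp_neg_mul 5 hr]
        norm_num [Nat.factorial]

/-- The denominator of the integrand of `Gfun`, with `b = ν cos θ_h`. -/
def neelDenom (b t : ℝ) : ℝ := b ^ 2 * t ^ 2 + 4 * (t ^ 2 - 1) ^ 2

lemma min_le_neelDenom (b t : ℝ) : min (b ^ 2 / 4) (9 / 4) ≤ neelDenom b t := by
  unfold neelDenom
  rcases le_or_gt (1 / 4) (t ^ 2) with ht | ht
  · have : b ^ 2 / 4 ≤ b ^ 2 * t ^ 2 := by nlinarith [sq_nonneg b]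
    exact (min_le_left _ _).trans (by nlinarith [sq_nonneg (t ^ 2 - 1)])
  · exact (min_le_right _ _).trans (by nlinarith [sq_nonneg (b * t)])

lemma neelDenom_pos {b : ℝ} (hb : b ≠ 0) (t : ℝ) : 0 < neelDenom b t :=
  (lt_min (by positivity) (by norm_num)).trans_le (min_le_neelDenom b t)

lemma abs_inv_neelDenom_sub_le {b : ℝ} (hb : b ≠ 0) (t : ℝ) :
    |(neelDenom b t)⁻¹ - 4⁻¹|
      ≤ (b ^ 2 + 12) / (4 * min (b ^ 2 / 4) (9 / 4)) * (t ^ 2 + t ^ 4) := by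
  have hD := neelDenom_pos hb t
  have hnum : |4 - neelDenom b t| ≤ (b ^ 2 + 12) * (t ^ 2 + t ^ 4) := by
    rw [show 4 - neelDenom b t = t ^ 2 * (8 - b ^ 2 - 4 * t ^ 2) by unfold neelDenom; ring,
      abs_le]
    constructor <;> nlinarith [sq_nonneg b, sq_nonneg t, sq_nonneg (t ^ 2), sq_nonneg (b * t),
      mul_nonneg (sq_nonneg b) (sq_nonneg (t ^ 2))]
  calc |(neelDenom b t)⁻¹ - 4⁻¹| = |4 - neelDenom b t| / (4 * neelDenom b t) := by
        rw [inv_sub_inv hD.ne' four_ne_zero, abs_div, abs_of_pos (mul_pos hD four_pos), mul_comm]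
    _ ≤ (b ^ 2 + 12) * (t ^ 2 + t ^ 4) / (4 * min (b ^ 2 / 4) (9 / 4)) := by
        gcongr; exact min_le_neelDenom b t
    _ = _ := by ring

lemma Gfun_eq (ν h x : ℝ) : Gfun ν h x = 2 * ν / π *
    ∫ t in Ioi (0 : ℝ), t * exp (-(|x| * cos (arcsin h) * t)) *
      (neelDenom (ν * cos (arcsin h)) t)⁻¹ := by
  unfold Gfun neelDenom
  congr 1
  refine setIntegral_congr_fun measurableSet_Ioi fun t _ => ?_
  rw [div_eq_mul_inv]; ring_nf

lemma cos_arcsin_pos {h : ℝ} (hh : h ∈ Ioo (-1 : ℝ) 1) : 0 < cos (arcsin h) := by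
  rw [cos_arcsin]
  exact sqrt_pos.mpr (by nlinarith [hh.1, hh.2])

/-- quadratic decay of the fundamental solution with quartic error:
`|G(x) - ν/(2π cos²θ_h x²)| ≤ C/x⁴` for `|x| ≥ 1`. -/
theorem Gfun_decay (ν h : ℝ) (hν : 0 < ν) (hh : h ∈ Set.Ico (0 : ℝ) 1) :
    ∃ C : ℝ, 0 < C ∧ ∀ x : ℝ, 1 ≤ |x| →
      |Gfun ν h x - ν / (2 * Real.pi * Real.cos (Real.arcsin h) ^ 2 * x ^ 2)|
        ≤ C / x ^ 4 := by
  simp only [Gfun_eq]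
  set c := cos (arcsin h)
  have hc : 0 < c := cos_arcsin_pos ⟨by linarith [hh.1], hh.2⟩
  have hb : ν * c ≠ 0 := by positivity
  set K := ((ν * c) ^ 2 + 12) / (4 * min ((ν * c) ^ 2 / 4) (9 / 4))
  refine ⟨2 * ν / π * K * (6 / c ^ 4 + 120 / c ^ 6), by positivity, fun x hx => ?_⟩
  have hr : 0 < |x| * c := by positivity
  have hlead : ν / (2 * π * c ^ 2 * x ^ 2) = 2 * ν / π * (4⁻¹ / (|x| * c) ^ 2) := by
    rw [mul_pow, sq_abs]; field_simp; ring
  have hpow : 6 / (|x| * c) ^ 4 + 120 / (|x| * c) ^ 6 ≤ (6 / c ^ 4 + 120 / c ^ 6) / x ^ 4 :=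
    calc 6 / (|x| * c) ^ 4 + 120 / (|x| * c) ^ 6
        = 6 / c ^ 4 / |x| ^ 4 + 120 / c ^ 6 / |x| ^ 6 := by ring
      _ ≤ 6 / c ^ 4 / |x| ^ 4 + 120 / c ^ 6 / |x| ^ 4 := by
          gcongr; norm_num
      _ = (6 / c ^ 4 + 120 / c ^ 6) / x ^ 4 := by rw [Even.pow_abs ⟨2, rfl⟩, add_div]
  rw [hlead, ← mul_sub, abs_mul, abs_of_pos (by positivity : 0 < 2 * ν / π)]
  calc _ ≤ 2 * ν / π * (K * (6 / (|x| * c) ^ 4 + 120 / (|x| * c) ^ 6)) := by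
        gcongr
        exact abs_integral_mul_exp_neg_mul_sub_le hr (by unfold neelDenom; fun_prop)
          fun t _ => abs_inv_neelDenom_sub_le hb t
    _ ≤ 2 * ν / π * (K * ((6 / c ^ 4 + 120 / c ^ 6) / x ^ 4)) := by gcongr
    _ = _ := by ring
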